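/- arXiv:2511.19637 — 6 statements merged into one kernel-verified Lean document; each statement's English description precedes it below -/
import Mathlib

section
/- Let A, B : H ⇉ H be maximally monotone operators on a real Hilbert space and α, β > 0. A point x* satisfies 0 ∈ A(x*) + B(x*) if and only if there exists z* ∈ H such that x* = J_{αA}(z*) and x* = J_{βB}((1 + β/α)x* - (β/α)z*), where J denotes the resolvent. -/
open RealInnerProductSpace

/-!
With `a := α⁻¹ • (z - x)`, the defining property of the resolvent turns `x = J_{αA} z` into
`a ∈ A x`, and, since `(1 + β/α) x - (β/α) z - x = -β a`, it turns
`x = J_{βB} ((1 + β/α) x - (β/α) z)` into `-a ∈ B x`. As `z ↦ α⁻¹ • (z - x)` is onto,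
both sides say that `A x ∩ -B x` is nonempty.
-/

section Module

variable {𝕜 E : Type*} [Field 𝕜] [AddCommGroup E] [Module 𝕜 E]

theorem inv_smul_extrapolation_sub_eq_neg {α β : 𝕜} (hα : α ≠ 0) (hβ : β ≠ 0) (x z : E) :
    β⁻¹ • ((1 + β / α) • x - (β / α) • z - x) = -(α⁻¹ • (z - x)) := by
  match_scalars <;> field_simp
  ring

theorem exists_inv_smul_sub_iff {α : 𝕜} (hα : α ≠ 0) (x : E) (P : E → Prop) :
    (∃ z, P (α⁻¹ • (z - x))) ↔ ∃ a, P a :=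
  ⟨fun ⟨_, h⟩ => ⟨_, h⟩, fun ⟨a, h⟩ => ⟨x + α • a, by simpa [hα] using h⟩⟩

end Module

theorem exists_add_eq_zero_iff_exists_neg_mem {E : Type*} [AddGroup E] (S T : Set E) :
    (∃ a ∈ S, ∃ b ∈ T, a + b = 0) ↔ ∃ a, a ∈ S ∧ -a ∈ T := by
  refine ⟨fun ⟨a, ha, b, hb, hab⟩ => ⟨a, ha, ?_⟩, fun ⟨a, ha, hb⟩ => ⟨a, ha, -a, hb, add_neg_cancel a⟩⟩
  rwa [neg_eq_of_add_eq_zero_right hab]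

theorem fixed_point_characterization_general
    {H : Type*} [NormedAddCommGroup H] [InnerProductSpace ℝ H]
    (A B : H → Set H)
    (α β : ℝ) (hα : 0 < α) (hβ : 0 < β)
    (JA JB : H → H)
    -- JA is the (single-valued) resolvent of αA, JB that of βB
    (hJA : ∀ z x, JA z = x ↔ α⁻¹ • (z - x) ∈ A x)
    (hJB : ∀ z x, JB z = x ↔ β⁻¹ • (z - x) ∈ B x)
    (xs : H) :
    (∃ a ∈ A xs, ∃ b ∈ B xs, a + b = 0) ↔
      ∃ zs : H, xs = JA zs ∧ xs = JB ((1 + β / α) • xs - (β / α) • zs) := by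
  have resolvent_conditions (zs : H) :
      (xs = JA zs ∧ xs = JB ((1 + β / α) • xs - (β / α) • zs)) ↔
        (α⁻¹ • (zs - xs) ∈ A xs ∧ -(α⁻¹ • (zs - xs)) ∈ B xs) := by
    rw [eq_comm, hJA, eq_comm, hJB, inv_smul_extrapolation_sub_eq_neg hα.ne' hβ.ne']
  simp only [resolvent_conditions, exists_add_eq_zero_iff_exists_neg_mem]
  exact (exists_inv_smul_sub_iff hα.ne' xs fun a => a ∈ A xs ∧ -a ∈ B xs).symm

/-- Fixed-point characterization: `0 ∈ A(x*) + B(x*)` iff there is `z*` with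
`x* = J_{αA}(z*)` and `x* = J_{βB}((1+β/α)x* - (β/α)z*)`. -/
theorem fixed_point_characterization
    {H : Type*} [NormedAddCommGroup H] [InnerProductSpace ℝ H] [CompleteSpace H]
    (A B : H → Set H)
    -- A is maximally monotone
    (hAmono : ∀ x y u v, u ∈ A x → v ∈ A y → 0 ≤ ⟪u - v, x - y⟫)
    (hAmax : ∀ x u, (∀ y v, v ∈ A y → 0 ≤ ⟪u - v, x - y⟫) → u ∈ A x)
    -- B is maximally monotone
    (hBmono : ∀ x y u v, u ∈ B x → v ∈ B y → 0 ≤ ⟪u - v, x - y⟫)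
    (hBmax : ∀ x u, (∀ y v, v ∈ B y → 0 ≤ ⟪u - v, x - y⟫) → u ∈ B x)
    (α β : ℝ) (hα : 0 < α) (hβ : 0 < β)
    (JA JB : H → H)
    -- JA is the (single-valued) resolvent of αA, JB that of βB
    (hJA : ∀ z x, JA z = x ↔ α⁻¹ • (z - x) ∈ A x)
    (hJB : ∀ z x, JB z = x ↔ β⁻¹ • (z - x) ∈ B x)
    (xs : H) :
    (∃ a ∈ A xs, ∃ b ∈ B xs, a + b = 0) ↔
      ∃ zs : H, xs = JA zs ∧ xs = JB ((1 + β / α) • xs - (β / α) • zs) :=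
  fixed_point_characterization_general A B α β hα hβ JA JB hJA hJB xs
end

section
/- On H = ℝ, with f = ι_{{0}} and g = 0, the iteration x₁ᵏ = prox_{αf}(zᵏ), x₂ᵏ = prox_{βg}((1+β/α)x₁ᵏ - (β/α)zᵏ), z^{k+1} = zᵏ + θ(x₂ᵏ - x₁ᵏ) reduces to z^{k+1} = (1 - θβ/α)zᵏ; consequently, for any z⁰ ≠ 0, (zᵏ) converges to 0 if and only if θ ∈ (0, 2α/β). -/
open Filter Topology

theorem eq_pow_mul_of_succ_eq_mul {M : Type*} [Monoid M] {r : M} {z : ℕ → M}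
    (h : ∀ k, z (k + 1) = r * z k) (k : ℕ) : z k = r ^ k * z 0 := by
  induction k with
  | zero => rw [pow_zero, one_mul]
  | succ k ih => rw [h k, ih, pow_succ', mul_assoc]

theorem tendsto_pow_mul_const_nhds_zero_iff {𝕜 : Type*} [Field 𝕜] [LinearOrder 𝕜]
    [IsStrictOrderedRing 𝕜] [Archimedean 𝕜] [TopologicalSpace 𝕜] [OrderTopology 𝕜]
    {r c : 𝕜} (hc : c ≠ 0) :
    Tendsto (fun k : ℕ ↦ r ^ k * c) atTop (𝓝 0) ↔ |r| < 1 := by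
  have h := (Homeomorph.mulRight₀ c hc).isEmbedding.tendsto_nhds_iff
    (f := fun k : ℕ ↦ r ^ k) (l := atTop) (y := 0)
  simp only [Function.comp_def, Homeomorph.coe_mulRight₀, zero_mul] at h
  rw [← tendsto_pow_atTop_nhds_zero_iff, h]

theorem abs_one_sub_mul_div_lt_one_iff {𝕜 : Type*} [Field 𝕜] [LinearOrder 𝕜]
    [IsStrictOrderedRing 𝕜] {a b θ : 𝕜} (ha : 0 < a) (hb : 0 < b) :
    |1 - θ * b / a| < 1 ↔ 0 < θ ∧ θ < 2 * a / b := by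
  rw [abs_lt, neg_lt_sub_iff_lt_add, sub_lt_self_iff, div_pos_iff_of_pos_right ha,
    mul_pos_iff_of_pos_right hb, div_lt_iff₀ ha, lt_div_iff₀ hb]
  constructor
  · rintro ⟨h2, h0⟩
    exact ⟨h0, by linarith⟩
  · rintro ⟨h0, h2⟩
    exact ⟨by linarith, h0⟩

theorem counterexample_f_indicator_g_zero_general
    (α β θ : ℝ) (hα : 0 < α) (hβ : 0 < β)
    (x1 x2 z : ℕ → ℝ)
    (hx1 : ∀ k, x1 k = 0)                           -- prox_{αf} = 0 since f = ι_{{0}}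
    (hx2 : ∀ k, x2 k = (1 + β / α) * x1 k - (β / α) * z k)  -- prox_{βg} = Id since g = 0
    (hz : ∀ k, z (k + 1) = z k + θ * (x2 k - x1 k))
    (hz0 : z 0 ≠ 0) :
    (∀ k, z (k + 1) = (1 - θ * β / α) * z k) ∧
      (Tendsto z atTop (𝓝 0) ↔ 0 < θ ∧ θ < 2 * α / β) := by
  have hrec : ∀ k, z (k + 1) = (1 - θ * β / α) * z k := fun k ↦ by
    rw [hz k, hx2 k, hx1 k]
    ring
  refine ⟨hrec, ?_⟩
  rw [funext (eq_pow_mul_of_succ_eq_mul hrec), tendsto_pow_mul_const_nhds_zero_iff hz0,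
    abs_one_sub_mul_div_lt_one_iff hα hβ]

/-- Counterexample on `ℝ` with `f = ι_{0}`, `g = 0`: the iteration reduces to
`z^{k+1} = (1 - θβ/α) zᵏ` and, for `z⁰ ≠ 0`, converges to `0` iff
`θ ∈ (0, 2α/β)`. -/
theorem counterexample_f_indicator_g_zero
    (α β θ : ℝ) (hα : 0 < α) (hβ : 0 < β) (hθ : θ ≠ 0)
    (x1 x2 z : ℕ → ℝ)
    (hx1 : ∀ k, x1 k = 0)                           -- prox_{αf} = 0 since f = ι_{{0}}
    (hx2 : ∀ k, x2 k = (1 + β / α) * x1 k - (β / α) * z k)  -- prox_{βg} = Id since g = 0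
    (hz : ∀ k, z (k + 1) = z k + θ * (x2 k - x1 k))
    (hz0 : z 0 ≠ 0) :
    (∀ k, z (k + 1) = (1 - θ * β / α) * z k) ∧
      (Tendsto z atTop (𝓝 0) ↔ 0 < θ ∧ θ < 2 * α / β) :=
  counterexample_f_indicator_g_zero_general α β θ hα hβ x1 x2 z hx1 hx2 hz hz0
end

section
/- Let λ₁, λ₂ ≥ 0 with λ₁λ₂ < 1, and let R₁, R₂ : H → H be λ₁-conic and λ₂-conic, respectively. Then the composition R₂ ∘ R₁ is λ-conic with λ = (λ₁ + λ₂ - 2λ₁λ₂)/(1 - λ₁λ₂). -/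
/-!
Put `u = x - y`, `a = R₁ x - R₁ y`, `b = R₂ (R₁ x) - R₂ (R₁ y)`. In a Hilbert space, a map is
`λ`-conic, for `λ > 0`, iff `(1 - λ) ‖u - a‖² ≤ λ (‖u‖² - ‖a‖²)` for all pairs `x, y`. With
`c = λ₁ + λ₂ - 2λ₁λ₂`, the inequalities for `R₁` and `R₂`, weighted by `cλ₂` and `cλ₁`, sum to
`λ₁λ₂` times the inequality for `R₂ ∘ R₁` plus the square `‖λ₂(1 - λ₁)(u - a) - λ₁(1 - λ₂)(a - b)‖²`.
-/

theorem add_sub_two_mul_mul_pos {l1 l2 : ℝ} (h1 : 0 < l1) (h2 : 0 < l2) (h12 : l1 * l2 < 1) :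
    0 < l1 + l2 - 2 * l1 * l2 := by
  nlinarith [sq_nonneg (l1 - l2)]

section Normed

variable {E : Type*} [SeminormedAddCommGroup E] [NormedSpace ℝ E]

def IsConic (l : ℝ) (C : E → E) : Prop :=
  ∃ N : E → E, LipschitzWith 1 N ∧ C = fun x => (1 - l) • x + l • N x

theorem isConic_zero_iff {C : E → E} : IsConic 0 C ↔ C = id := by
  constructor
  · rintro ⟨N, -, rfl⟩
    funext x
    simp
  · rintro rfl
    exact ⟨id, LipschitzWith.id, by funext x; simp⟩

theorem IsConic.norm_sub_le {l : ℝ} {C : E → E} (hC : IsConic l C) (hl : 0 ≤ l) (x y : E) :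
    ‖C x - C y - (1 - l) • (x - y)‖ ≤ l * ‖x - y‖ := by
  obtain ⟨N, hN, rfl⟩ := hC
  have hdiff : (1 - l) • x + l • N x - ((1 - l) • y + l • N y) - (1 - l) • (x - y) =
      l • (N x - N y) := by
    module
  rw [hdiff, norm_smul, Real.norm_of_nonneg hl, ← dist_eq_norm, ← dist_eq_norm]
  gcongr
  simpa using hN.dist_le_mul x y

theorem isConic_of_norm_sub_le {l : ℝ} {C : E → E} (hl : 0 < l)
    (hC : ∀ x y, ‖C x - C y - (1 - l) • (x - y)‖ ≤ l * ‖x - y‖) : IsConic l C := by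
  refine ⟨fun x => x + l⁻¹ • (C x - x), LipschitzWith.of_dist_le_mul fun x y => ?_, ?_⟩
  · have hdiff : x + l⁻¹ • (C x - x) - (y + l⁻¹ • (C y - y)) =
        l⁻¹ • (C x - C y - (1 - l) • (x - y)) := by
      match_scalars <;> field_simp <;> ring
    rw [dist_eq_norm, dist_eq_norm, hdiff, norm_smul, Real.norm_of_nonneg (inv_nonneg.2 hl.le),
      NNReal.coe_one, one_mul, inv_mul_le_iff₀ hl]
    exact hC x y
  · funext x
    rw [smul_add, smul_smul, mul_inv_cancel₀ hl.ne', one_smul]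
    module

end Normed

section Hilbert

variable {H : Type*} [NormedAddCommGroup H] [InnerProductSpace ℝ H]

theorem norm_sub_one_sub_smul_le_iff {l : ℝ} (hl : 0 ≤ l) (u a : H) :
    ‖a - (1 - l) • u‖ ≤ l * ‖u‖ ↔ (1 - l) * ‖u - a‖ ^ 2 ≤ l * (‖u‖ ^ 2 - ‖a‖ ^ 2) := by
  have hsq : ‖a - (1 - l) • u‖ ^ 2 - (l * ‖u‖) ^ 2 =
      (1 - l) * ‖u - a‖ ^ 2 - l * (‖u‖ ^ 2 - ‖a‖ ^ 2) := by
    simp only [mul_pow, ← real_inner_self_eq_norm_sq, inner_sub_left, inner_sub_right,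
      real_inner_smul_left, real_inner_smul_right, real_inner_comm u a]
    ring
  rw [← sq_le_sq₀ (norm_nonneg _) (by positivity)]
  constructor <;> intro h <;> linarith

theorem one_sub_mul_norm_sub_sq_le_comp {l1 l2 : ℝ} (h1 : 0 < l1) (h2 : 0 < l2)
    (h12 : l1 * l2 < 1) {u a b : H}
    (ha : (1 - l1) * ‖u - a‖ ^ 2 ≤ l1 * (‖u‖ ^ 2 - ‖a‖ ^ 2))
    (hb : (1 - l2) * ‖a - b‖ ^ 2 ≤ l2 * (‖a‖ ^ 2 - ‖b‖ ^ 2)) :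
    (1 - (l1 + l2 - 2 * l1 * l2) / (1 - l1 * l2)) * ‖u - b‖ ^ 2 ≤
      (l1 + l2 - 2 * l1 * l2) / (1 - l1 * l2) * (‖u‖ ^ 2 - ‖b‖ ^ 2) := by
  set c := l1 + l2 - 2 * l1 * l2
  have hs : 0 < 1 - l1 * l2 := by linarith
  have hc : 0 < c := add_sub_two_mul_mul_pos h1 h2 h12
  have key : l1 * l2 * ((1 - l1) * (1 - l2) * ‖u - b‖ ^ 2 - c * (‖u‖ ^ 2 - ‖b‖ ^ 2)) =
      c * l2 * ((1 - l1) * ‖u - a‖ ^ 2 - l1 * (‖u‖ ^ 2 - ‖a‖ ^ 2)) +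
      c * l1 * ((1 - l2) * ‖a - b‖ ^ 2 - l2 * (‖a‖ ^ 2 - ‖b‖ ^ 2)) -
      ‖(l2 * (1 - l1)) • (u - a) - (l1 * (1 - l2)) • (a - b)‖ ^ 2 := by
    simp only [← real_inner_self_eq_norm_sq, inner_sub_left, inner_sub_right,
      real_inner_smul_left, real_inner_smul_right, real_inner_comm u a, real_inner_comm u b,
      real_inner_comm a b]
    ring
  have hcomp : (1 - l1) * (1 - l2) * ‖u - b‖ ^ 2 ≤ c * (‖u‖ ^ 2 - ‖b‖ ^ 2) := by
    refine sub_nonpos.1 (nonpos_of_mul_nonpos_right ?_ (mul_pos h1 h2))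
    rw [key]
    have hwa := mul_nonpos_of_nonneg_of_nonpos (mul_pos hc h2).le (sub_nonpos.2 ha)
    have hwb := mul_nonpos_of_nonneg_of_nonpos (mul_pos hc h1).le (sub_nonpos.2 hb)
    linarith [sq_nonneg ‖(l2 * (1 - l1)) • (u - a) - (l1 * (1 - l2)) • (a - b)‖]
  rw [one_sub_div hs.ne', div_mul_eq_mul_div, div_mul_eq_mul_div, div_le_div_iff_of_pos_right hs]
  linarith

theorem IsConic.comp {l1 l2 : ℝ} {R1 R2 : H → H} (hR1 : IsConic l1 R1) (hR2 : IsConic l2 R2)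
    (h1 : 0 ≤ l1) (h2 : 0 ≤ l2) (h12 : l1 * l2 < 1) :
    IsConic ((l1 + l2 - 2 * l1 * l2) / (1 - l1 * l2)) (R2 ∘ R1) := by
  rcases h1.eq_or_lt with rfl | h1
  · rw [isConic_zero_iff.1 hR1]
    simpa using hR2
  rcases h2.eq_or_lt with rfl | h2
  · rw [isConic_zero_iff.1 hR2]
    simpa using hR1
  have hl : 0 < (l1 + l2 - 2 * l1 * l2) / (1 - l1 * l2) :=
    div_pos (add_sub_two_mul_mul_pos h1 h2 h12) (by linarith)
  refine isConic_of_norm_sub_le hl fun x y => ?_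
  rw [norm_sub_one_sub_smul_le_iff hl.le]
  refine one_sub_mul_norm_sub_sq_le_comp h1 h2 h12 (a := R1 x - R1 y) ?_ ?_
  · exact (norm_sub_one_sub_smul_le_iff h1.le _ _).1 (hR1.norm_sub_le h1.le x y)
  · exact (norm_sub_one_sub_smul_le_iff h2.le _ _).1 (hR2.norm_sub_le h2.le (R1 x) (R1 y))

end Hilbert

theorem conic_composition_general
    {H : Type*} [NormedAddCommGroup H] [InnerProductSpace ℝ H]
    (l1 l2 : ℝ) (h1 : 0 ≤ l1) (h2 : 0 ≤ l2) (h12 : l1 * l2 < 1)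
    (R1 R2 : H → H)
    (hR1 : ∃ N : H → H, LipschitzWith 1 N ∧
      R1 = fun x => (1 - l1) • x + l1 • N x)
    (hR2 : ∃ N : H → H, LipschitzWith 1 N ∧
      R2 = fun x => (1 - l2) • x + l2 • N x) :
    ∃ N : H → H, LipschitzWith 1 N ∧
      (R2 ∘ R1) = fun x =>
        (1 - (l1 + l2 - 2 * l1 * l2) / (1 - l1 * l2)) • x +
          ((l1 + l2 - 2 * l1 * l2) / (1 - l1 * l2)) • N x :=
  IsConic.comp hR1 hR2 h1 h2 h12

/-- Composition of a `λ₁`-conic and a `λ₂`-conic operator with `λ₁λ₂ < 1` is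
`(λ₁ + λ₂ - 2λ₁λ₂)/(1 - λ₁λ₂)`-conic. -/
theorem conic_composition
    {H : Type*} [NormedAddCommGroup H] [InnerProductSpace ℝ H] [CompleteSpace H]
    (l1 l2 : ℝ) (h1 : 0 ≤ l1) (h2 : 0 ≤ l2) (h12 : l1 * l2 < 1)
    (R1 R2 : H → H)
    (hR1 : ∃ N : H → H, LipschitzWith 1 N ∧
      R1 = fun x => (1 - l1) • x + l1 • N x)
    (hR2 : ∃ N : H → H, LipschitzWith 1 N ∧
      R2 = fun x => (1 - l2) • x + l2 • N x) :
    ∃ N : H → H, LipschitzWith 1 N ∧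
      (R2 ∘ R1) = fun x =>
        (1 - (l1 + l2 - 2 * l1 * l2) / (1 - l1 * l2)) • x +
          ((l1 + l2 - 2 * l1 * l2) / (1 - l1 * l2)) • N x :=
  conic_composition_general l1 l2 h1 h2 h12 R1 R2 hR1 hR2
end

section
/- With the update z⁺ = z + θ(x₂ - x₁), x₁ = J_{αA}(z), x₂ = J_{βB}((1+β/α)x₁ - (β/α)z), the map z ↦ z⁺ equals (1 - θβ/(α+β))Id + (θβ/(α+β))·R_B∘R_A, where R_A := (1+β/α)J_{αA} - (β/α)Id and R_B := (1+α/β)J_{βB} - (α/β)Id. -/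
/-- The extended Douglas--Rachford update is a `θβ/(α+β)`-averaging of the
composition of the two relaxed resolvents `R_B ∘ R_A`. -/
theorem update_is_averaged_composition
    {H : Type*} [NormedAddCommGroup H] [InnerProductSpace ℝ H] [CompleteSpace H]
    (α β θ : ℝ) (hα : 0 < α) (hβ : 0 < β)
    (JA JB : H → H)
    (RA RB : H → H)
    (hRA : RA = fun z => (1 + β / α) • JA z - (β / α) • z)
    (hRB : RB = fun w => (1 + α / β) • JB w - (α / β) • w) :
    ∀ z : H,
      z + θ • (JB ((1 + β / α) • JA z - (β / α) • z) - JA z)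
        = (1 - θ * β / (α + β)) • z + (θ * β / (α + β)) • RB (RA z) := by
  intro z
  subst hRA hRB
  simp only
  match_scalars <;> field_simp <;> ring
end

section
/- Define λ₋(ρ, ω, θ) := 1 - ρω(1+θ)/2 - (ρ√ω/2)·√(ω(1+θ)² - 4) for ρ, ω, θ > 0 with ω(1+θ)² ≥ 4. Then for every θ > 0, λ₋(min(2, 2θ), 1/θ, θ) = -1. -/
/-- At `ρ = min(2, 2θ)` and `ω = 1/θ`, the eigenvalue
`λ₋(ρ,ω,θ) = 1 - ρω(1+θ)/2 - (ρ√ω/2)√(ω(1+θ)² - 4)` equals `-1`. -/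
theorem lambda_minus_at_bound
    (lam : ℝ → ℝ → ℝ → ℝ)
    (hlam : ∀ ρ ω θ : ℝ, lam ρ ω θ =
      1 - ρ * ω * (1 + θ) / 2 - (ρ * Real.sqrt ω / 2) * Real.sqrt (ω * (1 + θ) ^ 2 - 4)) :
    ∀ θ : ℝ, 0 < θ → lam (min 2 (2 * θ)) (1 / θ) θ = -1 := by
  intro θ hθ
  rw [hlam]
  have h1 : (1/θ) * (1+θ)^2 - 4 = ((1-θ)/θ)^2 * θ := by
    field_simp; ring
  have hsq : Real.sqrt (1/θ) * Real.sqrt ((1/θ) * (1+θ)^2 - 4) = |1 - θ| / θ := by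
    rw [h1, ← Real.sqrt_mul (by positivity)]
    have : 1/θ * (((1-θ)/θ)^2 * θ) = ((1-θ)/θ)^2 := by field_simp
    rw [this, Real.sqrt_sq_eq_abs, abs_div, abs_of_pos hθ]
  rcases le_or_gt θ 1 with h | h
  · have hmin : min 2 (2 * θ) = 2 * θ := min_eq_right (by linarith)
    have habs : |1 - θ| = 1 - θ := abs_of_nonneg (by linarith)
    rw [hmin]
    have key : 2 * θ * Real.sqrt (1/θ) / 2 * Real.sqrt ((1/θ) * (1+θ)^2 - 4)
        = 1 - θ := by
      have := hsq
      rw [habs] at this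
      have h2 : 2 * θ * Real.sqrt (1/θ) / 2 * Real.sqrt ((1/θ) * (1+θ)^2 - 4)
          = θ * (Real.sqrt (1/θ) * Real.sqrt ((1/θ) * (1+θ)^2 - 4)) := by ring
      rw [h2, this]
      field_simp
    rw [key]
    field_simp
    ring
  · have hmin : min 2 (2 * θ) = 2 := min_eq_left (by linarith)
    have habs : |1 - θ| = θ - 1 := by rw [abs_of_nonpos (by linarith)]; ring
    rw [hmin]
    have key : 2 * Real.sqrt (1/θ) / 2 * Real.sqrt ((1/θ) * (1+θ)^2 - 4)
        = (θ - 1) / θ := by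
      have := hsq
      rw [habs] at this
      linarith [this]
    rw [key]
    field_simp
    ring
end

section
/- Let Q be a symmetric bounded linear operator on a real Hilbert space H and (vᵏ) a sequence in H such that both (⟨vᵏ - v̄, Q(vᵏ - v̄)⟩) and (⟨vᵏ - v̂, Q(vᵏ - v̂)⟩) converge, where v̄ and v̂ are weak limits of subsequences of (vᵏ). Then ⟨v̄ - v̂, Q(v̄ - v̂)⟩ = 0. -/
open Filter Topology RealInnerProductSpace

/-- If both quadratic sequences `⟨vᵏ - v̄, Q(vᵏ - v̄)⟩` and
`⟨vᵏ - v̂, Q(vᵏ - v̂)⟩` converge, where `v̄` and `v̂` are weak limits of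
subsequences of `(vᵏ)`, then `⟨v̄ - v̂, Q(v̄ - v̂)⟩ = 0`. -/
theorem weak_cluster_quadratic_form_zero
    {H : Type*} [NormedAddCommGroup H] [InnerProductSpace ℝ H] [CompleteSpace H]
    (Q : H →L[ℝ] H) (hQ : ∀ x y : H, ⟪Q x, y⟫ = ⟪x, Q y⟫)
    (v : ℕ → H) (vbar vhat : H)
    (φ ψ : ℕ → ℕ) (hφ : StrictMono φ) (hψ : StrictMono ψ)
    (hweak1 : ∀ w : H,
      Tendsto (fun n => (⟪v (φ n), w⟫ : ℝ)) atTop (𝓝 ⟪vbar, w⟫))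
    (hweak2 : ∀ w : H,
      Tendsto (fun n => (⟪v (ψ n), w⟫ : ℝ)) atTop (𝓝 ⟪vhat, w⟫))
    (hc1 : ∃ L : ℝ,
      Tendsto (fun k => (⟪v k - vbar, Q (v k - vbar)⟫ : ℝ)) atTop (𝓝 L))
    (hc2 : ∃ L : ℝ,
      Tendsto (fun k => (⟪v k - vhat, Q (v k - vhat)⟫ : ℝ)) atTop (𝓝 L)) :
    ⟪vbar - vhat, Q (vbar - vhat)⟫ = 0 := by
  obtain ⟨L1, h1⟩ := hc1
  obtain ⟨L2, h2⟩ := hc2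
  set w : H := vbar - vhat with hw
  set c : ℝ := ⟪vbar, Q vbar⟫ - ⟪vhat, Q vhat⟫ with hc
  have key : ∀ k, (⟪v k - vbar, Q (v k - vbar)⟫ : ℝ) - ⟪v k - vhat, Q (v k - vhat)⟫
      = -2 * ⟪v k, Q w⟫ + c := by
    intro k
    have hsym : ∀ a b : H, (⟪a, Q b⟫ : ℝ) = ⟪b, Q a⟫ := fun a b => by
      rw [← hQ]; exact real_inner_comm _ _
    simp only [hw, hc, map_sub, inner_sub_left, inner_sub_right]
    rw [hsym vbar (v k), hsym vhat (v k)]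
    ring
  -- limit of the difference along the whole sequence
  have hdiff : Tendsto (fun k => (⟪v k - vbar, Q (v k - vbar)⟫ : ℝ)
      - ⟪v k - vhat, Q (v k - vhat)⟫) atTop (𝓝 (L1 - L2)) := h1.sub h2
  have hdiff' : Tendsto (fun k => -2 * (⟪v k, Q w⟫ : ℝ) + c) atTop (𝓝 (L1 - L2)) := by
    simpa only [key] using hdiff
  have lim1 : Tendsto (fun n => -2 * (⟪v (φ n), Q w⟫ : ℝ) + c) atTop
      (𝓝 (-2 * ⟪vbar, Q w⟫ + c)) := ((hweak1 (Q w)).const_mul (-2)).add_const c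
  have lim2 : Tendsto (fun n => -2 * (⟪v (ψ n), Q w⟫ : ℝ) + c) atTop
      (𝓝 (-2 * ⟪vhat, Q w⟫ + c)) := ((hweak2 (Q w)).const_mul (-2)).add_const c
  have e1 : -2 * (⟪vbar, Q w⟫ : ℝ) + c = L1 - L2 :=
    tendsto_nhds_unique lim1 (hdiff'.comp hφ.tendsto_atTop)
  have e2 : -2 * (⟪vhat, Q w⟫ : ℝ) + c = L1 - L2 :=
    tendsto_nhds_unique lim2 (hdiff'.comp hψ.tendsto_atTop)
  have : (⟪vbar, Q w⟫ : ℝ) = ⟪vhat, Q w⟫ := by linarith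
  calc (⟪w, Q w⟫ : ℝ) = ⟪vbar, Q w⟫ - ⟪vhat, Q w⟫ := by rw [hw, inner_sub_left]
    _ = 0 := by rw [this, sub_self]
end
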